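/- For b = 2, the possible configurations of the carries process base 2 on n numbers are exactly the binary strings of length n-1 with no two consecutive 1s, and the number of such strings is the Fibonacci number F_{n+1} (with F_1 = F_2 = 1). -/
import Mathlib

open Finset

/-- the "no two consecutive trues" predicate -/
def NoCC (m : ℕ) (t : Fin m → Bool) : Prop :=
  ∀ i : Fin m, ∀ h : i.val + 1 < m, ¬ (t i = true ∧ t ⟨i.val + 1, h⟩ = true)

instance (m : ℕ) : DecidablePred (NoCC m) := fun t => by
  unfold NoCC; infer_instance

lemma cons_mk_succ {m : ℕ} (b : Bool) (s : Fin m → Bool) (k : ℕ) (hk : k + 1 < m + 1)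
    (hk' : k < m) :
    (Fin.cons b s : Fin (m + 1) → Bool) ⟨k + 1, hk⟩ = s ⟨k, hk'⟩ := rfl

lemma cons_mk_zero {m : ℕ} (b : Bool) (s : Fin m → Bool) (h : 0 < m + 1) :
    (Fin.cons b s : Fin (m + 1) → Bool) ⟨0, h⟩ = b := rfl

lemma noCC_cons {m : ℕ} (b : Bool) (s : Fin m → Bool) :
    NoCC (m + 1) (Fin.cons b s) ↔
      NoCC m s ∧ (∀ h : 0 < m, ¬ (b = true ∧ s ⟨0, h⟩ = true)) := by
  constructor
  · intro H
    refine ⟨fun j hj hc => ?_, fun h hc => ?_⟩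
    · exact H ⟨j.val + 1, by omega⟩ (show j.val + 1 + 1 < m + 1 by omega)
        ⟨(cons_mk_succ b s j.val (by omega) j.isLt).trans hc.1,
         (cons_mk_succ b s (j.val + 1) (by omega) hj).trans hc.2⟩
    · exact H ⟨0, by omega⟩ (show 0 + 1 < m + 1 by omega)
        ⟨(cons_mk_zero b s (by omega)).trans hc.1,
         (cons_mk_succ b s 0 (by omega) h).trans hc.2⟩
  · rintro ⟨H1, H2⟩ ⟨k, hk⟩ hi hc
    cases k with
    | zero =>
      have hi' : 0 + 1 < m + 1 := hi
      exact H2 (by omega)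
        ⟨(cons_mk_zero b s hk).symm.trans hc.1,
         (cons_mk_succ b s 0 (by omega) (by omega)).symm.trans hc.2⟩
    | succ k =>
      have hi' : k + 1 + 1 < m + 1 := hi
      exact H1 ⟨k, by omega⟩ (show k + 1 < m by omega)
        ⟨(cons_mk_succ b s k (by omega) (by omega)).symm.trans hc.1,
         (cons_mk_succ b s (k + 1) (by omega) (by omega)).symm.trans hc.2⟩

lemma card_split (m : ℕ) (Q : (Fin (m + 1) → Bool) → Prop) [DecidablePred Q] :
    (univ.filter Q).card
      = (univ.filter fun s : Fin m → Bool => Q (Fin.cons false s)).card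
      + (univ.filter fun s : Fin m → Bool => Q (Fin.cons true s)).card := by
  have hinj : ∀ b : Bool,
      Function.Injective (fun s : Fin m → Bool => (Fin.cons b s : Fin (m + 1) → Bool)) := by
    intro b x y h
    funext i
    have := congrFun h i.succ
    simpa using this
  have hu : univ.filter Q
      = ((univ.filter fun s : Fin m → Bool => Q (Fin.cons false s)).image
          (fun s => Fin.cons false s))
      ∪ ((univ.filter fun s : Fin m → Bool => Q (Fin.cons true s)).image
          (fun s => Fin.cons true s)) := by
    ext t
    simp only [mem_filter, mem_union, mem_image, mem_univ, true_and]
    constructor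
    · intro hQ
      have ht : Fin.cons (t 0) (Fin.tail t) = t := Fin.cons_self_tail t
      cases hb : t 0 with
      | false => exact Or.inl ⟨Fin.tail t, by rw [← hb, ht]; exact hQ, by rw [← hb]; exact ht⟩
      | true => exact Or.inr ⟨Fin.tail t, by rw [← hb, ht]; exact hQ, by rw [← hb]; exact ht⟩
    · rintro (⟨s, hs, rfl⟩ | ⟨s, hs, rfl⟩) <;> exact hs
  rw [hu, Finset.card_union_of_disjoint, Finset.card_image_of_injective _ (hinj false),
    Finset.card_image_of_injective _ (hinj true)]
  rw [Finset.disjoint_left]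
  rintro t ht1 ht2
  simp only [mem_image, mem_filter] at ht1 ht2
  obtain ⟨s, _, rfl⟩ := ht1
  obtain ⟨s', _, he⟩ := ht2
  have := congrFun he 0
  simp at this

def fcnt (m : ℕ) : ℕ := (univ.filter (NoCC m)).card
def gcnt (m : ℕ) : ℕ :=
  (univ.filter (fun t : Fin m → Bool => NoCC m t ∧ ∀ h : 0 < m, t ⟨0, h⟩ = false)).card

lemma fcnt_zero : fcnt 0 = 1 := by decide
lemma gcnt_zero : gcnt 0 = 1 := by decide

lemma fcnt_succ (m : ℕ) : fcnt (m + 1) = fcnt m + gcnt m := by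
  rw [fcnt, card_split]
  congr 1
  · unfold fcnt; congr 1; ext s; simp [noCC_cons]
  · unfold gcnt; congr 1; ext s; simp [noCC_cons]

lemma gcnt_succ (m : ℕ) : gcnt (m + 1) = fcnt m := by
  rw [gcnt, card_split]
  have h1 : (univ.filter fun s : Fin m → Bool =>
      (fun t : Fin (m + 1) → Bool => NoCC (m + 1) t ∧ ∀ h : 0 < m + 1, t ⟨0, h⟩ = false)
        (Fin.cons true s)) = ∅ := by
    ext s
    simp [cons_mk_zero]
  have h2 : (univ.filter fun s : Fin m → Bool =>
      (fun t : Fin (m + 1) → Bool => NoCC (m + 1) t ∧ ∀ h : 0 < m + 1, t ⟨0, h⟩ = false)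
        (Fin.cons false s)) = univ.filter (NoCC m) := by
    ext s
    simp [cons_mk_zero, noCC_cons]
  rw [h1, h2]
  simp [fcnt]

lemma fg_fib : ∀ m : ℕ, fcnt m = Nat.fib (m + 2) ∧ gcnt m = Nat.fib (m + 1) := by
  intro m
  induction m with
  | zero => exact ⟨fcnt_zero, gcnt_zero⟩
  | succ k ih =>
    refine ⟨?_, ?_⟩
    · have h : Nat.fib (k + 1 + 2) = Nat.fib (k + 2) + Nat.fib (k + 1) := by
        rw [Nat.fib_add_two, show k + 1 + 1 = k + 2 by ring, Nat.add_comm]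
      rw [fcnt_succ, ih.1, ih.2, h]
    · rw [gcnt_succ, ih.1]

lemma count_lemma (m : ℕ) :
    (univ.filter (fun t : Fin m → Bool =>
        ∀ i : Fin m, ∀ h : i.val + 1 < m, ¬ (t i = true ∧ t ⟨i.val + 1, h⟩ = true))).card
      = Nat.fib (m + 2) :=
  (fg_fib m).1

lemma two_desc : ∀ x y z : Fin 2, x < y → y < z → False := by decide

/-- Base-2 carries: two consecutive descents are impossible; every binary string of length
`n-1` with no two consecutive 1s arises as a descent pattern; and the number of such strings
is the Fibonacci number `F_{n+1}` (with `F_1 = F_2 = 1`, Mathlib's `Nat.fib`). -/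
theorem base_two_carries_fibonacci (n : ℕ) :
    (∀ B : Fin n → Fin 2, ∀ i : Fin (n - 1), ∀ h : i.val + 1 < n - 1,
        ¬ (B ⟨i.val + 1, by have := i.isLt; omega⟩ < B ⟨i.val, by have := i.isLt; omega⟩ ∧
           B ⟨i.val + 2, by omega⟩ < B ⟨i.val + 1, by have := i.isLt; omega⟩)) ∧
    (∀ t : Fin (n - 1) → Bool,
        (∀ i : Fin (n - 1), ∀ h : i.val + 1 < n - 1, ¬ (t i = true ∧ t ⟨i.val + 1, h⟩ = true)) →
        ∃ B : Fin n → Fin 2, ∀ i : Fin (n - 1),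
          (t i = true ↔ B ⟨i.val + 1, by have := i.isLt; omega⟩
              < B ⟨i.val, by have := i.isLt; omega⟩)) ∧
    (Finset.univ.filter (fun t : Fin (n - 1) → Bool =>
        ∀ i : Fin (n - 1), ∀ h : i.val + 1 < n - 1,
          ¬ (t i = true ∧ t ⟨i.val + 1, h⟩ = true))).card
      = Nat.fib (n + 1) := by
  refine ⟨?_, ?_, ?_⟩
  · intro B i h hc
    exact two_desc _ _ _ hc.2 hc.1
  · intro t ht
    refine ⟨fun j => if hj : j.val < n - 1 then (if t ⟨j.val, hj⟩ then 1 else 0) else 0,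
      fun i => ?_⟩
    have hi : i.val < n - 1 := i.isLt
    constructor
    · intro hti
      simp only [dif_pos hi, hti, if_true]
      by_cases h1 : i.val + 1 < n - 1
      · have h2 := ht i h1
        have hf : t ⟨i.val + 1, h1⟩ = false := by
          by_contra hb
          exact h2 ⟨hti, by simpa using hb⟩
        simp only [dif_pos h1, hf, if_false]
        decide
      · simp only [dif_neg h1]
        decide
    · intro hlt
      by_contra hb
      have hf : t i = false := by simpa using hb
      simp only [dif_pos hi, hf, if_false] at hlt
      exact absurd hlt (by simp [Fin.not_lt])
  · cases n with
    | zero =>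
      rw [Finset.filter_true_of_mem]
      · simp
      · intro t _ i
        exact absurd i.isLt (by omega)
    | succ k =>
      exact count_lemma k
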